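/- arXiv:1609.03236 — 6 statements merged into one kernel-verified Lean document; each statement's English description precedes it below -/
import Mathlib

section
/- Let V satisfy the basic assumptions and let n ≥ 2. Then the energy E_n attains a unique minimiser x̄ on 𝒟_n; this minimiser lies in 𝒟_n ∖ ∂𝒟_n, i.e. 0 = x̄(0) < x̄(1) < ⋯ < x̄(n−1) < x̄(n) = 1, and it satisfies the force balance equations Σ_{k=0, k≠i}^{n} V'(n[x̄(k) − x̄(i)]) = 0 for every i = 1, …, n−1. -/
open Filter Set MeasureTheory
open scoped Classical ENNReal NNReal BigOperators

noncomputable section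

/-- `lam V x` is λ(x) := inf_{(0,x)} V''. -/
def lam (V : ℝ → ℝ) (x : ℝ) : ℝ :=
  sInf (deriv (deriv V) '' Set.Ioo 0 x)

/-- The basic assumptions (Reg), (Sing), (Cvx), (Dec) on the interaction
potential `V`, with decay exponent `a`. -/
structure BasicAssumptions (V : ℝ → ℝ) (a : ℝ) : Prop where
  nonneg : ∀ x : ℝ, 0 ≤ V x
  even : ∀ x : ℝ, V (-x) = V x
  pos : ∀ x : ℝ, x ≠ 0 → 0 < V x
  smooth : ContDiffOn ℝ 2 V {(0 : ℝ)}ᶜ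
  sing : Filter.Tendsto V (nhdsWithin 0 {(0 : ℝ)}ᶜ) Filter.atTop
  cvx : ∀ x : ℝ, 0 < x → 0 < lam V x
  decV : Filter.Tendsto V Filter.atTop (nhds 0)
  decV' : Filter.Tendsto (deriv V) Filter.atTop (nhds 0)
  one_lt_a : 1 < a
  decV'' : ∀ δ : ℝ, 0 < δ → ∃ c : ℝ, 0 < c ∧
    ∀ x : ℝ, δ ≤ |x| → deriv (deriv V) x ≤ c * |x| ^ (-(a + 2))

/-- The configuration space 𝒟_n. -/
def Dn (n : ℕ) : Set (Fin (n + 1) → ℝ) :=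
  {x | x 0 = 0 ∧ x (Fin.last n) = 1 ∧ Monotone x}

/-- The energy E_n(x) := (1/n) Σ_{k=1}^{n} Σ_{j=0}^{n−k} V(n[x(j+k) − x(j)]),
valued in [0,∞], with the convention V(0) = +∞ from (Sing).  The double sum is
written as a sum over all pairs q < p. -/
def En (V : ℝ → ℝ) (n : ℕ) (x : Fin (n + 1) → ℝ) : ℝ≥0∞ :=
  ENNReal.ofReal (1 / (n : ℝ)) *
    ∑ p : Fin (n + 1), ∑ q : Fin (n + 1),
      if (q : ℕ) < (p : ℕ) then
        (if x p = x q then ⊤ else ENNReal.ofReal (V ((n : ℝ) * (x p - x q))))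
      else 0

/-- The first-order Taylor remainder φ_k(y) := V(k+y) − V(k) − V'(k)y. -/
def phi (V : ℝ → ℝ) (k y : ℝ) : ℝ :=
  V (k + y) - V k - deriv V k * y

/-- The lower-bound function Φ_k. -/
def PhiLB (V : ℝ → ℝ) (k y : ℝ) : ℝ :=
  if y ≤ 1 then 1 / 2 * lam V (k + 1) * y ^ 2 else lam V (k + 1) * (y - 1 / 2)

/-- σ^n(i) := Σ_{k=i+1}^{n−i} min(k−i, n−i+1−k)|V'(k)| for 1 ≤ i ≤ ⌊n/2⌋,
and 0 otherwise. -/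
def sigman (V : ℝ → ℝ) (n i : ℕ) : ℝ :=
  if 1 ≤ i ∧ i ≤ n / 2 then
    ∑ k ∈ Finset.Icc (i + 1) (n - i),
      ((min (k - i) (n + 1 - i - k) : ℕ) : ℝ) * |deriv V (k : ℝ)|
  else 0

/-- σ^∞(i) := Σ_{k=i+1}^∞ (k−i)|V'(k)| for i ≥ 1 (index 0 is inert). -/
def sigmaInf (V : ℝ → ℝ) (i : ℕ) : ℝ :=
  if i = 0 then 0
  else ∑' m : ℕ, ((m + 1 : ℕ) : ℝ) * |deriv V ((i + 1 + m : ℕ) : ℝ)|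

/-- Dom E_n^1 := {ε ∈ ℝ^n : −1 ≤ ε(i) ≤ n, Σ_{i=1}^n ε(i) = 0}, regarded as a
subset of ℓ²(ℕ) by extension by zero. -/
def DomEn1 (n : ℕ) : Set (ℕ → ℝ) :=
  {ε | (∀ i, 1 ≤ i → i ≤ n → -1 ≤ ε i ∧ ε i ≤ (n : ℝ)) ∧
    (∀ i, i = 0 ∨ n < i → ε i = 0) ∧
    (∑ i ∈ Finset.Icc 1 n, ε i) = 0}

/-- The renormalised energy
E_n^1(ε) := Σ_{k=1}^{n} Σ_{j=0}^{n−k} [V(k + Σ_{l=j+1}^{j+k} ε(l)) − V(k)]. -/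
def En1 (V : ℝ → ℝ) (n : ℕ) (ε : ℕ → ℝ) : ℝ :=
  ∑ k ∈ Finset.Icc 1 n, ∑ j ∈ Finset.range (n - k + 1),
    (V ((k : ℝ) + ∑ l ∈ Finset.Icc (j + 1) (j + k), ε l) - V (k : ℝ))

/-- The quadratic-type part Q_n(ε) := Σ_{k=1}^{n} Σ_{j=0}^{n−k} φ_k(Σ_{l=j+1}^{k+j} ε(l)). -/
def Qn (V : ℝ → ℝ) (n : ℕ) (ε : ℕ → ℝ) : ℝ :=
  ∑ k ∈ Finset.Icc 1 n, ∑ j ∈ Finset.range (n - k + 1),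
    phi V (k : ℝ) (∑ l ∈ Finset.Icc (j + 1) (j + k), ε l)

/-- The half truncation ε^{n,1/2}(i) := ε(i) for 1 ≤ i ≤ ⌈n/2⌉ and 0 otherwise. -/
def half (n : ℕ) (ε : ℕ → ℝ) (i : ℕ) : ℝ :=
  if 1 ≤ i ∧ i ≤ (n + 1) / 2 then ε i else 0

/-- The reversal ε⃖(i) := ε(n+1−i) for 1 ≤ i ≤ n, extended by zero. -/
def rev (n : ℕ) (ε : ℕ → ℝ) (i : ℕ) : ℝ :=
  if 1 ≤ i ∧ i ≤ n then ε (n + 1 - i) else 0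

/-- Dom E_∞^l := {ε ∈ ℓ²(ℕ) : ε(i) ≥ −1 for all i ≥ 1} (index 0 is inert). -/
def DomEinfl : Set (ℕ → ℝ) :=
  {ε | Summable (fun i => ε i ^ 2) ∧ ε 0 = 0 ∧ ∀ i, 1 ≤ i → -1 ≤ ε i}

/-- Q_∞(ε) := Σ_{k=1}^∞ Σ_{j=0}^∞ φ_k(Σ_{l=j+1}^{k+j} ε(l)), valued in [0,∞]
(the summands are nonnegative). -/
def Qinf (V : ℝ → ℝ) (ε : ℕ → ℝ) : ℝ≥0∞ :=
  ∑' (k : ℕ) (j : ℕ),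
    ENNReal.ofReal (phi V ((k : ℝ) + 1) (∑ l ∈ Finset.Icc (j + 1) (j + k + 1), ε l))

/-- The linear term (σ^∞, ε)_{ℓ²(ℕ)} as an extended real (difference of the
sums of the positive and negative parts). -/
def linPart (V : ℝ → ℝ) (ε : ℕ → ℝ) : EReal :=
  ((∑' i : ℕ, ENNReal.ofReal (sigmaInf V i * ε i) : ℝ≥0∞) : EReal) -
    ((∑' i : ℕ, ENNReal.ofReal (-(sigmaInf V i * ε i)) : ℝ≥0∞) : EReal)

/-- The limit boundary-layer energy E_∞^l(ε) := Q_∞(ε) + (σ^∞, ε), valued in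
the extended reals. -/
def Einfl (V : ℝ → ℝ) (ε : ℕ → ℝ) : EReal :=
  (Qinf V ε : EReal) + linPart V ε

end

/-!
Because `V(t) → ∞` as `t → 0`, the convention `V(0) = ∞` makes `E_n` a continuous
`[0, ∞]`-valued function on the compact set `𝒟_n`, so it has a minimiser; `E_n` is finite at the
uniform configuration, hence every minimiser is strictly increasing. On strictly increasing
configurations `E_n` is a sum of the convex functions `V(n[x(p) − x(q)])`, and the pairs
`(i, 0)`, with `x(0) = 0` fixed, make it strictly convex there, which gives uniqueness. The force balance is the
vanishing of the derivative along the coordinate direction `e_i`, using that `V'` is odd.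
-/

open Topology

theorem isOpen_setOf_strictMono {α : Type*} [LinearOrder α] [TopologicalSpace α]
    [OrderClosedTopology α] (m : ℕ) : IsOpen {x : Fin (m + 1) → α | StrictMono x} := by
  simp_rw [Fin.strictMono_iff_lt_succ, ofPred_forall]
  exact isOpen_iInter_of_finite fun j => isOpen_lt (continuous_apply _) (continuous_apply _)

theorem continuous_ite_eq_top_ofReal {X : Type*} [TopologicalSpace X] [T1Space X]
    {f : X → ℝ} {x₀ : X} (hf : ContinuousOn f {x₀}ᶜ) (hsing : Tendsto f (𝓝[≠] x₀) atTop) :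
    Continuous fun x => if x = x₀ then ∞ else ENNReal.ofReal (f x) := by
  refine continuous_iff_continuousAt.mpr fun x => ?_
  by_cases hx : x = x₀
  · subst hx
    rw [← continuousWithinAt_compl_self, ContinuousWithinAt, if_pos rfl]
    refine (ENNReal.tendsto_ofReal_atTop.comp hsing).congr' ?_
    filter_upwards [self_mem_nhdsWithin] with y (hy : y ≠ _)
    simp [hy]
  · have hnhds : {x₀}ᶜ ∈ 𝓝 x := isOpen_compl_singleton.mem_nhds hx
    refine (ENNReal.continuous_ofReal.continuousAt.comp (hf.continuousAt hnhds)).congr ?_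
    filter_upwards [hnhds] with y (hy : y ≠ x₀)
    simp [hy]

theorem sum_ite_lt_mul_single_sub {R : Type*} [CommRing R] {m : ℕ} (g : Fin m → Fin m → R)
    (i : Fin m) :
    (∑ p : Fin m, ∑ q : Fin m, if (q : ℕ) < p then
        g p q * ((Pi.single i 1 : Fin m → R) p - (Pi.single i 1 : Fin m → R) q) else 0) =
      ∑ k : Fin m, ((if (k : ℕ) < i then g i k else 0) - (if (i : ℕ) < k then g k i else 0)) := by
  have hsplit : ∀ p q : Fin m,
      (if (q : ℕ) < p then g p q * ((Pi.single i 1 : Fin m → R) p - (Pi.single i 1 : Fin m → R) q)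
        else 0) =
      (if p = i then (if (q : ℕ) < i then g i q else 0) else 0) -
        (if q = i then (if (i : ℕ) < p then g p i else 0) else 0) := by
    intro p q
    simp only [Pi.single_apply]
    split_ifs <;> simp_all
  simp only [hsplit, Finset.sum_sub_distrib, Finset.sum_ite_eq', Finset.mem_univ, if_true,
    Finset.sum_ite_irrel, Finset.sum_const_zero]

section Potential

variable {V : ℝ → ℝ} {a : ℝ}

theorem BasicAssumptions.hasDerivAt (h : BasicAssumptions V a) {x : ℝ} (hx : x ≠ 0) :
    HasDerivAt V (deriv V x) x :=
  ((h.smooth.contDiffAt (isOpen_compl_singleton.mem_nhds hx)).differentiableAt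
    (by norm_num)).hasDerivAt

theorem BasicAssumptions.continuousOn (h : BasicAssumptions V a) : ContinuousOn V {0}ᶜ :=
  h.smooth.continuousOn

theorem BasicAssumptions.deriv_deriv_pos (h : BasicAssumptions V a) {x : ℝ} (hx : 0 < x) :
    0 < deriv (deriv V) x := by
  have hlam := h.cvx (x + 1) (by linarith)
  have hb : BddBelow (deriv (deriv V) '' Ioo 0 (x + 1)) := by
    by_contra hb
    rw [lam, Real.sInf_of_not_bddBelow hb] at hlam
    exact hlam.false
  exact hlam.trans_le (csInf_le hb ⟨x, ⟨hx, by linarith⟩, rfl⟩)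

theorem BasicAssumptions.strictConvexOn_Ioi (h : BasicAssumptions V a) :
    StrictConvexOn ℝ (Ioi 0) V :=
  strictConvexOn_of_deriv2_pos (convex_Ioi 0)
    (h.continuousOn.mono fun _ hx => (ne_of_gt hx : _ ≠ (0 : ℝ)))
    fun x hx => h.deriv_deriv_pos (by simpa using hx)

theorem BasicAssumptions.deriv_neg (h : BasicAssumptions V a) {x : ℝ} (hx : x ≠ 0) :
    deriv V (-x) = -deriv V x := by
  have hcomp : HasDerivAt (fun y => V (-y)) (deriv V (-x) * -1) x :=
    (h.hasDerivAt (neg_ne_zero.mpr hx)).comp x (hasDerivAt_neg x)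
  rw [show (fun y => V (-y)) = V from funext h.even] at hcomp
  linarith [(h.hasDerivAt hx).unique hcomp]

end Potential

theorem isCompact_Dn (n : ℕ) : IsCompact (Dn n) := by
  have hclosed : IsClosed (Dn n) :=
    (isClosed_eq (continuous_apply 0) continuous_const).inter
      ((isClosed_eq (continuous_apply _) continuous_const).inter isClosed_monotone)
  refine (isCompact_Icc (a := 0) (b := 1)).of_isClosed_subset hclosed
    fun x hx => ⟨fun j => ?_, fun j => ?_⟩
  · simpa [hx.1] using hx.2.2 (Fin.zero_le j)
  · simpa [hx.2.1] using hx.2.2 (Fin.le_last j)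

theorem convex_Dn_inter_strictMono (n : ℕ) : Convex ℝ (Dn n ∩ {x | StrictMono x}) := by
  rintro x ⟨⟨hx0, hx1, -⟩, hx⟩ y ⟨⟨hy0, hy1, -⟩, hy⟩ a b ha hb hab
  have hsm : StrictMono (a • x + b • y) := fun p q hpq => by
    have h1 := hx hpq
    have h2 := hy hpq
    simp only [Pi.add_apply, Pi.smul_apply, smul_eq_mul]
    nlinarith [mul_le_mul_of_nonneg_left (min_le_left (x q - x p) (y q - y p)) ha,
      mul_le_mul_of_nonneg_left (min_le_right (x q - x p) (y q - y p)) hb,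
      lt_min (sub_pos.2 h1) (sub_pos.2 h2)]
  refine ⟨⟨?_, ?_, hsm.monotone⟩, hsm⟩ <;> simp [hx0, hx1, hy0, hy1, hab]

theorem uniform_mem_Dn {n : ℕ} (hn : n ≠ 0) :
    (fun j : Fin (n + 1) => (j : ℝ) / n) ∈ Dn n ∩ {x | StrictMono x} := by
  have hsm : StrictMono fun j : Fin (n + 1) => (j : ℝ) / n := fun p q hpq =>
    div_lt_div_of_pos_right (by exact_mod_cast hpq) (by positivity)
  exact ⟨⟨by simp, by simp [hn], hsm.monotone⟩, hsm⟩

section Energy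

variable {V : ℝ → ℝ} {a : ℝ} {n : ℕ}

def pairEnergy (V : ℝ → ℝ) (n : ℕ) (x : Fin (n + 1) → ℝ) : ℝ :=
  ∑ p : Fin (n + 1), ∑ q : Fin (n + 1),
    if (q : ℕ) < (p : ℕ) then V ((n : ℝ) * (x p - x q)) else 0

theorem pairEnergy_nonneg (hV : ∀ t, 0 ≤ V t) (x : Fin (n + 1) → ℝ) : 0 ≤ pairEnergy V n x :=
  Finset.sum_nonneg fun _ _ => Finset.sum_nonneg fun _ _ => ite_nonneg (hV _) le_rfl

theorem En_eq_ofReal_pairEnergy (hV : ∀ t, 0 ≤ V t) {x : Fin (n + 1) → ℝ}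
    (hx : StrictMono x) : En V n x = ENNReal.ofReal (1 / n * pairEnergy V n x) := by
  have hterm : ∀ p q : Fin (n + 1),
      (if (q : ℕ) < p then
        (if x p = x q then ∞ else ENNReal.ofReal (V (n * (x p - x q)))) else 0) =
      ENNReal.ofReal (if (q : ℕ) < p then V (n * (x p - x q)) else 0) := by
    intro p q
    split_ifs with hqp hxpq
    · exact absurd hxpq (hx (Fin.lt_def.mpr hqp)).ne'
    · rfl
    · simp
  have hnonneg : ∀ p q : Fin (n + 1),
      0 ≤ if (q : ℕ) < p then V (n * (x p - x q)) else 0 :=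
    fun _ _ => ite_nonneg (hV _) le_rfl
  rw [En, pairEnergy, ENNReal.ofReal_mul (by positivity),
    ENNReal.ofReal_sum_of_nonneg fun p _ => Finset.sum_nonneg fun q _ => hnonneg p q]
  simp_rw [ENNReal.ofReal_sum_of_nonneg fun q _ => hnonneg _ q, hterm]

theorem En_eq_top_of_not_strictMono (hn : n ≠ 0) {x : Fin (n + 1) → ℝ}
    (hmono : Monotone x) (hx : ¬ StrictMono x) : En V n x = ∞ := by
  obtain ⟨q, p, hqp, hxqp⟩ : ∃ q p : Fin (n + 1), q < p ∧ x q = x p := by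
    by_contra! hne
    exact hx fun q p hqp => (hmono hqp.le).lt_of_ne (hne q p hqp)
  rw [En, ENNReal.mul_eq_top]
  refine Or.inl ⟨by simpa using hn, ?_⟩
  refine ENNReal.sum_eq_top.mpr
    ⟨p, Finset.mem_univ _, ENNReal.sum_eq_top.mpr ⟨q, Finset.mem_univ _, ?_⟩⟩
  rw [if_pos (Fin.lt_def.mp hqp), if_pos hxqp.symm]

theorem continuous_En (h : BasicAssumptions V a) (hn : n ≠ 0) : Continuous (En V n) := by
  have hV := continuous_ite_eq_top_ofReal h.continuousOn h.sing
  have hterm : ∀ p q : Fin (n + 1), Continuous fun x : Fin (n + 1) → ℝ =>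
      if x p = x q then ∞ else ENNReal.ofReal (V (n * (x p - x q))) := fun p q =>
    (hV.comp ((continuous_const_mul (n : ℝ)).comp
      ((continuous_apply p).sub (continuous_apply q)))).congr fun x => by simp [sub_eq_zero, hn]
  refine (ENNReal.continuous_const_mul ENNReal.ofReal_ne_top).comp
    (continuous_finsetSum _ fun p _ => continuous_finsetSum _ fun q _ => ?_)
  by_cases hqp : (q : ℕ) < p
  · simpa only [hqp, if_true] using hterm p q
  · simpa only [hqp, if_false] using continuous_const

theorem exists_isMinOn_En (h : BasicAssumptions V a) (hn : n ≠ 0) :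
    ∃ x ∈ Dn n, IsMinOn (En V n) (Dn n) x :=
  (isCompact_Dn n).exists_isMinOn ⟨_, (uniform_mem_Dn hn).1⟩ (continuous_En h hn).continuousOn

theorem strictMono_of_isMinOn_En (h : BasicAssumptions V a) (hn : n ≠ 0)
    {x : Fin (n + 1) → ℝ} (hx : x ∈ Dn n) (hmin : IsMinOn (En V n) (Dn n) x) : StrictMono x := by
  by_contra hsm
  have hle : En V n x ≤ En V n _ := hmin (uniform_mem_Dn hn).1
  rw [En_eq_top_of_not_strictMono hn hx.2.2 hsm,
    En_eq_ofReal_pairEnergy h.nonneg (uniform_mem_Dn hn).2, top_le_iff] at hle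
  exact ENNReal.ofReal_ne_top hle

theorem isMinOn_pairEnergy_of_isMinOn_En (h : BasicAssumptions V a) (hn : n ≠ 0)
    {x : Fin (n + 1) → ℝ} (hx : StrictMono x) (hmin : IsMinOn (En V n) (Dn n) x) :
    IsMinOn (pairEnergy V n) (Dn n ∩ {x | StrictMono x}) x := by
  rintro y ⟨hyD, hy⟩
  have hle : En V n x ≤ En V n y := hmin hyD
  rw [En_eq_ofReal_pairEnergy h.nonneg hx, En_eq_ofReal_pairEnergy h.nonneg hy,
    ENNReal.ofReal_le_ofReal_iff (by have := pairEnergy_nonneg h.nonneg y; positivity)] at hle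
  exact le_of_mul_le_mul_left hle (by positivity)

theorem strictConvexOn_pairEnergy (h : BasicAssumptions V a) (hn : n ≠ 0) :
    StrictConvexOn ℝ (Dn n ∩ {x | StrictMono x}) (pairEnergy V n) := by
  refine ⟨convex_Dn_inter_strictMono n, ?_⟩
  rintro x ⟨hxD, hx⟩ y ⟨hyD, hy⟩ hxy s t hs ht hst
  obtain ⟨i, hi⟩ := Function.ne_iff.mp hxy
  have hi0 : (0 : Fin (n + 1)) < i := by
    refine lt_of_le_of_ne (Fin.zero_le i) fun h0 => hi ?_
    rw [← h0, hxD.1, hyD.1]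
  have hgap : ∀ z : Fin (n + 1) → ℝ, StrictMono z → ∀ p q : Fin (n + 1), q < p →
      (n : ℝ) * (z p - z q) ∈ Ioi 0 := fun z hz p q hqp =>
    mul_pos (by positivity) (sub_pos.2 (hz hqp))
  have hcomb : ∀ p q : Fin (n + 1), (n : ℝ) * ((s • x + t • y) p - (s • x + t • y) q) =
      s • ((n : ℝ) * (x p - x q)) + t • ((n : ℝ) * (y p - y q)) := fun p q => by
    simp only [Pi.add_apply, Pi.smul_apply, smul_eq_mul]; ring
  have hterm : ∀ p q : Fin (n + 1),
      (if (q : ℕ) < p then V (n * ((s • x + t • y) p - (s • x + t • y) q)) else 0) ≤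
        s * (if (q : ℕ) < p then V (n * (x p - x q)) else 0) +
          t * (if (q : ℕ) < p then V (n * (y p - y q)) else 0) := fun p q => by
    split_ifs with hqp
    · rw [hcomb]
      exact h.strictConvexOn_Ioi.convexOn.2 (hgap x hx p q hqp) (hgap y hy p q hqp)
        hs.le ht.le hst
    · simp
  have hterm_i : V (n * ((s • x + t • y) i - (s • x + t • y) 0)) <
      s * V (n * (x i - x 0)) + t * V (n * (y i - y 0)) := by
    rw [hcomb]
    refine h.strictConvexOn_Ioi.2 (hgap x hx i 0 hi0) (hgap y hy i 0 hi0) ?_ hs ht hst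
    rw [hxD.1, hyD.1]
    exact fun heq => hi (by simpa [hn] using heq)
  simp only [pairEnergy, smul_eq_mul, Finset.mul_sum, ← Finset.sum_add_distrib]
  refine Finset.sum_lt_sum (fun p _ => Finset.sum_le_sum fun q _ => hterm p q)
    ⟨i, Finset.mem_univ _, Finset.sum_lt_sum (fun q _ => hterm i q) ⟨0, Finset.mem_univ _, ?_⟩⟩
  rw [if_pos (Fin.lt_def.mp hi0), if_pos (Fin.lt_def.mp hi0), if_pos (Fin.lt_def.mp hi0)]
  exact hterm_i

theorem hasDerivAt_pairEnergy_add_smul (h : BasicAssumptions V a) (hn : n ≠ 0)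
    {x : Fin (n + 1) → ℝ} (hx : StrictMono x) (e : Fin (n + 1) → ℝ) :
    HasDerivAt (fun t : ℝ => pairEnergy V n (x + t • e))
      (∑ p : Fin (n + 1), ∑ q : Fin (n + 1), if (q : ℕ) < p then
        deriv V (n * (x p - x q)) * (n * (e p - e q)) else 0) 0 := by
  refine HasDerivAt.fun_sum fun p _ => HasDerivAt.fun_sum fun q _ => ?_
  by_cases hqp : (q : ℕ) < p
  · simp only [hqp, if_true]
    have hgap : (n : ℝ) * (x p - x q) ≠ 0 :=
      mul_ne_zero (by simpa using hn) (sub_ne_zero.2 (hx (Fin.lt_def.mpr hqp)).ne')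
    have hline : HasDerivAt (fun t : ℝ => (n : ℝ) * ((x + t • e) p - (x + t • e) q))
        (n * (e p - e q)) 0 := by
      have hlin : (fun t : ℝ => (n : ℝ) * ((x + t • e) p - (x + t • e) q)) =
          fun t => n * (x p - x q) + t * (n * (e p - e q)) := by
        funext t; simp only [Pi.add_apply, Pi.smul_apply, smul_eq_mul]; ring
      rw [hlin]
      simpa using ((hasDerivAt_id (0 : ℝ)).mul_const ((n : ℝ) * (e p - e q))).const_add
        ((n : ℝ) * (x p - x q))
    exact (h.hasDerivAt hgap).comp_of_eq 0 hline (by simp)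
  · simpa only [hqp, if_false] using hasDerivAt_const (0 : ℝ) (0 : ℝ)

theorem sum_pair_deriv_mul_single (h : BasicAssumptions V a) (hn : n ≠ 0) {x : Fin (n + 1) → ℝ}
    (hx : StrictMono x) (i : Fin (n + 1)) :
    (∑ p : Fin (n + 1), ∑ q : Fin (n + 1), if (q : ℕ) < p then
        deriv V (n * (x p - x q)) *
          (n * ((Pi.single i 1 : Fin (n + 1) → ℝ) p - (Pi.single i 1 : Fin (n + 1) → ℝ) q))
        else 0) =
      -n * ∑ k : Fin (n + 1), if k ≠ i then deriv V (n * (x k - x i)) else 0 := by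
  simp_rw [← mul_assoc]
  rw [sum_ite_lt_mul_single_sub (fun p q => deriv V (n * (x p - x q)) * n), Finset.mul_sum]
  refine Finset.sum_congr rfl fun k _ => ?_
  rcases lt_trichotomy (k : ℕ) i with hki | hki | hki
  · have hgap : (n : ℝ) * (x i - x k) ≠ 0 :=
      mul_ne_zero (by simpa using hn) (sub_ne_zero.2 (hx (Fin.lt_def.mpr hki)).ne')
    rw [if_pos hki, if_neg hki.not_gt, if_pos (Fin.ne_of_lt (Fin.lt_def.mpr hki)),
      show (n : ℝ) * (x k - x i) = -(n * (x i - x k)) by ring, h.deriv_neg hgap]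
    ring
  · rw [if_neg hki.not_lt, if_neg hki.symm.not_lt, if_neg (not_not.2 (Fin.ext hki))]
    ring
  · rw [if_neg hki.not_gt, if_pos hki, if_pos (Fin.ne_of_gt (Fin.lt_def.mpr hki))]
    ring

theorem force_balance_of_isMinOn (h : BasicAssumptions V a) (hn : n ≠ 0)
    {x : Fin (n + 1) → ℝ} (hx : x ∈ Dn n ∩ {x | StrictMono x})
    (hmin : IsMinOn (pairEnergy V n) (Dn n ∩ {x | StrictMono x}) x)
    (i : Fin (n + 1)) (hi0 : 0 < (i : ℕ)) (hin : (i : ℕ) < n) :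
    (∑ k : Fin (n + 1), if k ≠ i then deriv V (n * (x k - x i)) else 0) = 0 := by
  set e : Fin (n + 1) → ℝ := Pi.single i 1
  have hline : ∀ᶠ t in 𝓝 (0 : ℝ), x + t • e ∈ Dn n ∩ {x | StrictMono x} := by
    have hends : ∀ t : ℝ, x + t • e ∈ Dn n ↔ Monotone (x + t • e) := fun t => by
      have h0 : (0 : Fin (n + 1)) ≠ i := fun h0 => hi0.ne (by rw [← h0]; rfl)
      have hlast : Fin.last n ≠ i := fun hl => hin.ne' (by rw [← hl, Fin.val_last])
      simp [Dn, e, hx.1.1, hx.1.2.1, h0, hlast]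
    have hopen : ∀ᶠ t in 𝓝 (0 : ℝ), StrictMono (x + t • e) :=
      (continuous_const.add (continuous_id.smul continuous_const)).continuousAt.preimage_mem_nhds
        ((isOpen_setOf_strictMono n).mem_nhds (by simpa using hx.2))
    filter_upwards [hopen] with t ht
    exact ⟨(hends t).2 ht.monotone, ht⟩
  have hloc : IsLocalMin (fun t : ℝ => pairEnergy V n (x + t • e)) 0 := by
    filter_upwards [hline] with t ht
    simpa using hmin ht
  have hderiv := hloc.hasDerivAt_eq_zero (hasDerivAt_pairEnergy_add_smul h hn hx.2 e)
  rw [sum_pair_deriv_mul_single h hn hx.2 i, neg_mul, neg_eq_zero] at hderiv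
  exact (mul_eq_zero.mp hderiv).resolve_left (by simpa using hn)

end Energy

/-- for n ≥ 2 the energy E_n has a unique minimiser on 𝒟_n; the
minimiser is strictly increasing (i.e. lies in 𝒟_n ∖ ∂𝒟_n) and satisfies the
force balance Σ_{k≠i} V'(n[x̄(k) − x̄(i)]) = 0 for i = 1, …, n−1. -/
theorem statement1 (V : ℝ → ℝ) (a : ℝ) (h : BasicAssumptions V a)
    (n : ℕ) (hn : 2 ≤ n) :
    ∃ xbar ∈ Dn n, IsMinOn (En V n) (Dn n) xbar ∧
      (∀ y ∈ Dn n, IsMinOn (En V n) (Dn n) y → y = xbar) ∧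
      StrictMono xbar ∧
      ∀ i : Fin (n + 1), 0 < (i : ℕ) → (i : ℕ) < n →
        (∑ k : Fin (n + 1),
          if k ≠ i then deriv V ((n : ℝ) * (xbar k - xbar i)) else 0) = 0 := by
  have hn0 : n ≠ 0 := by omega
  obtain ⟨x, hxD, hmin⟩ := exists_isMinOn_En h hn0
  have hx := strictMono_of_isMinOn_En h hn0 hxD hmin
  have hminP := isMinOn_pairEnergy_of_isMinOn_En h hn0 hx hmin
  refine ⟨x, hxD, hmin, fun y hyD hymin => ?_, hx,
    force_balance_of_isMinOn h hn0 ⟨hxD, hx⟩ hminP⟩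
  have hy := strictMono_of_isMinOn_En h hn0 hyD hymin
  exact (strictConvexOn_pairEnergy h hn0).eq_of_isMinOn
    (isMinOn_pairEnergy_of_isMinOn_En h hn0 hy hymin) hminP ⟨hyD, hy⟩ ⟨hxD, hx⟩
end

section
/- Let V satisfy the basic assumptions and let n ≥ 2. For every ε ∈ ℝ^n with Σ_{i=1}^{n} ε(i) = 0 and ε(i) > −1 for all i, the renormalised energy splits as E_n^1(ε) = Q_n(ε) + Σ_{i=1}^{⌊n/2⌋} σ^n(i) (ε(i) + ε(n+1−i)), where Q_n(ε) := Σ_{k=1}^{n} Σ_{j=0}^{n−k} φ_k(Σ_{l=j+1}^{k+j} ε(l)). -/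
open Filter Set MeasureTheory
open scoped Classical ENNReal NNReal BigOperators

private lemma deriv2_pos (V : ℝ → ℝ) (a : ℝ) (h : BasicAssumptions V a)
    (x : ℝ) (hx : 0 < x) : 0 < deriv (deriv V) x := by
  have h1 : 0 < lam V (x + 1) := h.cvx _ (by linarith)
  have hmem : deriv (deriv V) x ∈ deriv (deriv V) '' Set.Ioo (0:ℝ) (x+1) :=
    ⟨x, ⟨hx, by linarith⟩, rfl⟩
  by_cases hb : BddBelow (deriv (deriv V) '' Set.Ioo (0:ℝ) (x+1))
  · exact lt_of_lt_of_le h1 (csInf_le hb hmem)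
  · rw [lam, csInf_of_not_bddBelow hb] at h1
    simpa using h1

private lemma derivV_neg (V : ℝ → ℝ) (a : ℝ) (h : BasicAssumptions V a)
    (x : ℝ) (hx : 0 < x) : deriv V x < 0 := by
  have hopen : IsOpen ({(0:ℝ)}ᶜ) := isOpen_compl_singleton
  have hd1 : ContDiffOn ℝ 1 (deriv V) {(0:ℝ)}ᶜ :=
    h.smooth.deriv_of_isOpen hopen (by norm_num)
  have hcont : ContinuousOn (deriv V) (Set.Ioi 0) :=
    hd1.continuousOn.mono (fun y hy => by
      simp only [Set.mem_compl_iff, Set.mem_singleton_iff]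
      exact ne_of_gt hy)
  have hstrict : StrictMonoOn (deriv V) (Set.Ioi 0) := by
    apply strictMonoOn_of_deriv_pos (convex_Ioi 0) hcont
    intro y hy
    rw [interior_Ioi] at hy
    exact deriv2_pos V a h y hy
  by_contra hcon
  push_neg at hcon
  have h1 : 0 < deriv V (x + 1) :=
    lt_of_le_of_lt hcon (hstrict hx (by simp; linarith) (by linarith))
  have h2 : ∀ᶠ y in atTop, deriv V (x + 1) ≤ deriv V y := by
    filter_upwards [eventually_ge_atTop (x + 1)] with y hy
    rcases eq_or_lt_of_le hy with rfl | hlt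
    · exact le_refl _
    · exact (hstrict (by simp; linarith) (by simp; linarith) hlt).le
  have := ge_of_tendsto h.decV' h2
  linarith

/-- splitting of the renormalised energy,
E_n^1(ε) = Q_n(ε) + Σ_{i=1}^{⌊n/2⌋} σ^n(i) (ε(i) + ε(n+1−i)). -/

private lemma countLem (n k i : ℕ) (hk1 : 1 ≤ k) (hk2 : k ≤ n)
    (hi1 : 1 ≤ i) (hi2 : i ≤ n) :
    ((Finset.range (n - k + 1)).filter (fun j => j + 1 ≤ i ∧ i ≤ j + k)).card
      = min i (min k (min (n + 1 - i) (n + 1 - k))) := by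
  have he : (Finset.range (n - k + 1)).filter (fun j => j + 1 ≤ i ∧ i ≤ j + k)
      = Finset.Icc (i - k) (min (i - 1) (n - k)) := by
    ext j
    simp only [Finset.mem_filter, Finset.mem_range, Finset.mem_Icc, le_min_iff,
      Nat.lt_succ_iff]
    omega
  rw [he, Nat.card_Icc]
  omega

private lemma innerSumLem (n k : ℕ) (ε : ℕ → ℝ) (hk1 : 1 ≤ k) (hk2 : k ≤ n) :
    ∑ j ∈ Finset.range (n - k + 1), ∑ l ∈ Finset.Icc (j + 1) (j + k), ε l
      = ∑ i ∈ Finset.Icc 1 n,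
          ((min i (min k (min (n + 1 - i) (n + 1 - k))) : ℕ) : ℝ) * ε i := by
  have h1 : ∀ j ∈ Finset.range (n - k + 1),
      ∑ l ∈ Finset.Icc (j + 1) (j + k), ε l
        = ∑ i ∈ Finset.Icc 1 n, if j + 1 ≤ i ∧ i ≤ j + k then ε i else 0 := by
    intro j hj
    simp only [Finset.mem_range] at hj
    rw [← Finset.sum_filter]
    apply Finset.sum_congr _ (fun _ _ => rfl)
    ext i
    simp only [Finset.mem_filter, Finset.mem_Icc]
    omega
  rw [Finset.sum_congr rfl h1, Finset.sum_comm]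
  refine Finset.sum_congr rfl fun i hi => ?_
  simp only [Finset.mem_Icc] at hi
  rw [← Finset.sum_filter, Finset.sum_const, ← countLem n k i hk1 hk2 hi.1 hi.2,
    nsmul_eq_mul]

/-- placeholder -/
theorem statement3 (V : ℝ → ℝ) (a : ℝ) (h : BasicAssumptions V a)
    (n : ℕ) (hn : 2 ≤ n) (ε : ℕ → ℝ)
    (hlb : ∀ i, 1 ≤ i → i ≤ n → -1 < ε i)
    (hsum : ∑ i ∈ Finset.Icc 1 n, ε i = 0) :
    En1 V n ε = Qn V n ε +
      ∑ i ∈ Finset.Icc 1 (n / 2), sigman V n i * (ε i + ε (n + 1 - i)) := by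
  classical
  have hneg : ∀ k ∈ Finset.Icc 1 n, deriv V (k : ℝ) < 0 := by
    intro k hk
    simp only [Finset.mem_Icc] at hk
    exact derivV_neg V a h _ (by exact_mod_cast hk.1)
  -- Step 1: the difference of En1 and Qn is the linear part
  have step1 : En1 V n ε - Qn V n ε
      = ∑ k ∈ Finset.Icc 1 n, deriv V (k : ℝ) *
          ∑ j ∈ Finset.range (n - k + 1), ∑ l ∈ Finset.Icc (j + 1) (j + k), ε l := by
    rw [En1, Qn, ← Finset.sum_sub_distrib]
    refine Finset.sum_congr rfl fun k _ => ?_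
    rw [← Finset.sum_sub_distrib, Finset.mul_sum]
    refine Finset.sum_congr rfl fun j _ => ?_
    simp only [phi]
    ring
  have step2 : En1 V n ε - Qn V n ε
      = ∑ i ∈ Finset.Icc 1 n, ∑ k ∈ Finset.Icc 1 n,
          deriv V (k : ℝ) * ((min i (min k (min (n + 1 - i) (n + 1 - k))) : ℕ) : ℝ) * ε i := by
    rw [step1, Finset.sum_congr rfl (fun k hk => by
      simp only [Finset.mem_Icc] at hk
      rw [innerSumLem n k ε hk.1 hk.2, Finset.mul_sum]), Finset.sum_comm]
    exact Finset.sum_congr rfl fun i _ => Finset.sum_congr rfl fun k _ => by ring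
  set C : ℝ := ∑ k ∈ Finset.Icc 1 n, deriv V (k : ℝ) * ((min k (n + 1 - k) : ℕ) : ℝ) with hC
  set T : ℕ → ℝ := fun m => ∑ k ∈ Finset.Icc 1 n,
      |deriv V (k : ℝ)| * ((min k (n + 1 - k) - m : ℕ) : ℝ) with hT
  -- Step 3: subtract the constant C and use the sum-zero constraint
  have step3 : En1 V n ε - Qn V n ε
      = ∑ i ∈ Finset.Icc 1 n, T (min i (n + 1 - i)) * ε i := by
    have key : ∀ i ∈ Finset.Icc 1 n,
        ∑ k ∈ Finset.Icc 1 n,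
            deriv V (k : ℝ) * ((min i (min k (min (n + 1 - i) (n + 1 - k))) : ℕ) : ℝ) * ε i
          = T (min i (n + 1 - i)) * ε i + C * ε i := by
      intro i hi
      simp only [hT, hC]
      rw [Finset.sum_mul, Finset.sum_mul, ← Finset.sum_add_distrib]
      refine Finset.sum_congr rfl fun k hk => ?_
      have habs : |deriv V (k : ℝ)| = -deriv V (k : ℝ) := abs_of_neg (hneg k hk)
      have hnat : (min i (min k (min (n + 1 - i) (n + 1 - k))))
          + (min k (n + 1 - k) - min i (n + 1 - i)) = min k (n + 1 - k) := by omega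
      have hcast : ((min i (min k (min (n + 1 - i) (n + 1 - k))) : ℕ) : ℝ)
          = ((min k (n + 1 - k) : ℕ) : ℝ)
            - ((min k (n + 1 - k) - min i (n + 1 - i) : ℕ) : ℝ) := by
        have h2 : ((min i (min k (min (n + 1 - i) (n + 1 - k)))
              + (min k (n + 1 - k) - min i (n + 1 - i)) : ℕ) : ℝ)
            = ((min k (n + 1 - k) : ℕ) : ℝ) := by rw [hnat]
        rw [Nat.cast_add] at h2
        linarith
      rw [hcast, habs]
      ring
    rw [step2, Finset.sum_congr rfl key, Finset.sum_add_distrib, ← Finset.mul_sum, hsum,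
      mul_zero, add_zero]
  -- T agrees with sigman in range
  have hsig : ∀ i, 1 ≤ i → i ≤ n / 2 → T i = sigman V n i := by
    intro i h1 h2
    rw [sigman, if_pos ⟨h1, h2⟩]
    simp only [hT]
    have hsub : Finset.Icc (i + 1) (n - i) ⊆ Finset.Icc 1 n :=
      Finset.Icc_subset_Icc (by omega) (by omega)
    have hz : ∀ k ∈ Finset.Icc 1 n, k ∉ Finset.Icc (i + 1) (n - i) →
        |deriv V (k : ℝ)| * ((min k (n + 1 - k) - i : ℕ) : ℝ) = 0 := by
      intro k hk hk'
      simp only [Finset.mem_Icc] at hk hk'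
      have hzero : min k (n + 1 - k) - i = 0 := by omega
      rw [hzero]
      simp
    rw [← Finset.sum_subset hsub hz]
    refine Finset.sum_congr rfl fun k hk => ?_
    simp only [Finset.mem_Icc] at hk
    have hmin : min k (n + 1 - k) - i = min (k - i) (n + 1 - i - k) := by omega
    rw [hmin, mul_comm]
  have hTmid : ∀ m : ℕ, 2 * m = n + 1 → T m = 0 := by
    intro m hm
    simp only [hT]
    apply Finset.sum_eq_zero
    intro k hk
    simp only [Finset.mem_Icc] at hk
    have hzero : min k (n + 1 - k) - m = 0 := by omega
    rw [hzero]
    simp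
  -- split the sum into i and n+1-i parts
  set F : ℕ → ℝ := fun i => T (min i (n + 1 - i)) * ε i with hF
  have split : ∑ i ∈ Finset.Icc 1 n, F i
      = ∑ i ∈ Finset.Icc 1 (n / 2), sigman V n i * (ε i + ε (n + 1 - i)) := by
    have h1 : Finset.Icc 1 n = Finset.Ioc 0 n := by
      ext x
      simp only [Finset.mem_Icc, Finset.mem_Ioc]
      omega
    have hsplit1 : ∑ i ∈ Finset.Ioc 0 (n / 2), F i + ∑ i ∈ Finset.Ioc (n / 2) n, F i
        = ∑ i ∈ Finset.Ioc 0 n, F i :=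
      Finset.sum_Ioc_consecutive F (Nat.zero_le _) (Nat.div_le_self n 2)
    have hrev : ∑ i ∈ Finset.Ioc (n / 2) n, F i
        = ∑ j ∈ Finset.Ioc 0 (n - n / 2), F (n + 1 - j) := by
      refine Finset.sum_nbij' (fun i => n + 1 - i) (fun j => n + 1 - j) ?_ ?_ ?_ ?_ ?_
      · intro i hi
        simp only [Finset.mem_Ioc] at hi ⊢
        omega
      · intro j hj
        simp only [Finset.mem_Ioc] at hj ⊢
        omega
      · intro i hi
        simp only [Finset.mem_Ioc] at hi
        show n + 1 - (n + 1 - i) = i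
        omega
      · intro j hj
        simp only [Finset.mem_Ioc] at hj
        show n + 1 - (n + 1 - j) = j
        omega
      · intro i hi
        simp only [Finset.mem_Ioc] at hi
        show F i = F (n + 1 - (n + 1 - i))
        congr 1
        omega
    have hsplit2 : ∑ j ∈ Finset.Ioc 0 (n / 2), F (n + 1 - j)
          + ∑ j ∈ Finset.Ioc (n / 2) (n - n / 2), F (n + 1 - j)
        = ∑ j ∈ Finset.Ioc 0 (n - n / 2), F (n + 1 - j) :=
      Finset.sum_Ioc_consecutive _ (Nat.zero_le _) (by omega)
    have hmidzero : ∑ j ∈ Finset.Ioc (n / 2) (n - n / 2), F (n + 1 - j) = 0 := by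
      apply Finset.sum_eq_zero
      intro j hj
      simp only [Finset.mem_Ioc] at hj
      have hFj : F (n + 1 - j) = T (min (n + 1 - j) (n + 1 - (n + 1 - j))) * ε (n + 1 - j) := rfl
      rw [hFj, hTmid _ (by omega), zero_mul]
    calc ∑ i ∈ Finset.Icc 1 n, F i = ∑ i ∈ Finset.Ioc 0 n, F i := by rw [h1]
      _ = ∑ i ∈ Finset.Ioc 0 (n / 2), F i + ∑ j ∈ Finset.Ioc 0 (n / 2), F (n + 1 - j) := by
          rw [← hsplit1, hrev, ← hsplit2, hmidzero, add_zero]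
      _ = ∑ i ∈ Finset.Ioc 0 (n / 2), (F i + F (n + 1 - i)) := Finset.sum_add_distrib.symm
      _ = ∑ i ∈ Finset.Icc 1 (n / 2), sigman V n i * (ε i + ε (n + 1 - i)) := by
          rw [show Finset.Ioc 0 (n / 2) = Finset.Icc 1 (n / 2) from by
            ext x
            simp only [Finset.mem_Icc, Finset.mem_Ioc]
            omega]
          refine Finset.sum_congr rfl fun i hi => ?_
          simp only [Finset.mem_Icc] at hi
          have e1 : min i (n + 1 - i) = i := by omega
          have e2 : min (n + 1 - i) (n + 1 - (n + 1 - i)) = i := by omega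
          have hFi : F i = T (min i (n + 1 - i)) * ε i := rfl
          have hFi' : F (n + 1 - i) = T (min (n + 1 - i) (n + 1 - (n + 1 - i))) * ε (n + 1 - i) :=
            rfl
          rw [hFi, hFi', e1, e2, ← hsig i hi.1 hi.2]
          ring
  have final : ∑ i ∈ Finset.Icc 1 n, T (min i (n + 1 - i)) * ε i
      = ∑ i ∈ Finset.Icc 1 (n / 2), sigman V n i * (ε i + ε (n + 1 - i)) := split
  linarith [step3, final]
end

section
/- Let V satisfy the basic assumptions. For any real k ≥ 1 and every y ∈ (−k, +∞), the first-order Taylor remainder φ_k(y) := V(k+y) − V(k) − V'(k)y satisfies φ_k(y) ≥ Φ_k(y), where Φ_k(y) := (1/2)λ(k+1)y² for y ∈ (−k, 1] and Φ_k(y) := λ(k+1)(y − 1/2) for y ∈ [1, +∞), and λ(x) := inf_{(0,x)} V''. -/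
open Filter Set MeasureTheory
open scoped Classical ENNReal NNReal BigOperators

/-!
On `(0, k + 1]` the function `x ↦ V' x - λ(k+1) x` is nondecreasing, since `V'' ≥ λ(k+1)` on
`(0, k + 1)`. Hence `x ↦ V x - λ(k+1) x² / 2` is convex there and lies above its tangent at `k`,
which is the quadratic bound for `y ≤ 1`. For `y ≥ 1`, `V` is convex on `(0, ∞)`, so `φ_k` lies
above its tangent at `1`, whose value `φ_k(1) ≥ λ(k+1)/2` and slope `V'(k+1) - V'(k) ≥ λ(k+1)`
come from the first part.
-/

section Tangent

variable {S : Set ℝ} {f f' : ℝ → ℝ} {x y : ℝ}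

theorem ConvexOn.add_mul_sub_le_of_hasDerivAt {d : ℝ} (hf : ConvexOn ℝ S f) (hx : x ∈ S)
    (hy : y ∈ S) (hd : HasDerivAt f d x) : f x + d * (y - x) ≤ f y := by
  rcases lt_trichotomy x y with hxy | rfl | hyx
  · have hslope := hf.le_slope_of_hasDerivAt hx hy hxy hd
    rw [slope_def_field, le_div_iff₀ (sub_pos.mpr hxy)] at hslope
    linarith
  · simp
  · have hslope := hf.slope_le_of_hasDerivAt hy hx hyx hd
    rw [slope_def_field, div_le_iff₀ (sub_pos.mpr hyx)] at hslope
    linarith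

theorem MonotoneOn.convexOn_of_hasDerivAt (hS : Convex ℝ S)
    (hf : ∀ x ∈ S, HasDerivAt f (f' x) x) (hmono : MonotoneOn f' S) : ConvexOn ℝ S f :=
  MonotoneOn.convexOn_of_deriv hS (fun x hx => (hf x hx).continuousAt.continuousWithinAt)
    (fun x hx => (hf x (interior_subset hx)).differentiableAt.differentiableWithinAt)
    ((hmono.mono interior_subset).congr fun x hx => (hf x (interior_subset hx)).deriv.symm)

theorem half_mul_sq_le_sub_sub_mul_of_monotoneOn {m : ℝ} (hS : Convex ℝ S)
    (hf : ∀ x ∈ S, HasDerivAt f (f' x) x) (hmono : MonotoneOn (fun x => f' x - m * x) S)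
    (hx : x ∈ S) (hy : y ∈ S) : m / 2 * (y - x) ^ 2 ≤ f y - f x - f' x * (y - x) := by
  have hg : ∀ t ∈ S, HasDerivAt (fun t => f t - m / 2 * t ^ 2) (f' t - m * t) t := fun t ht =>
    ((hf t ht).sub ((hasDerivAt_pow 2 t).const_mul (m / 2))).congr_deriv (by ring)
  have := (hmono.convexOn_of_hasDerivAt hS hg).add_mul_sub_le_of_hasDerivAt hx hy (hg x hx)
  linarith

end Tangent

section Potential

variable {V : ℝ → ℝ} {x c : ℝ}

theorem lam_le_deriv_deriv (hc : lam V c ≠ 0) (hx : x ∈ Ioo 0 c) :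
    lam V c ≤ deriv (deriv V) x := by
  have hbdd : BddBelow (deriv (deriv V) '' Ioo 0 c) := by
    by_contra hb
    exact hc (Real.sInf_of_not_bddBelow hb)
  exact csInf_le hbdd (mem_image_of_mem _ hx)

theorem ContDiffOn.hasDerivAt_deriv {U : Set ℝ} (hV : ContDiffOn ℝ 2 V U) (hU : IsOpen U)
    (hx : x ∈ U) : HasDerivAt (deriv V) (deriv (deriv V) x) x :=
  (((hV.deriv_of_isOpen hU (by norm_num)).differentiableOn one_ne_zero).differentiableAt
    (hU.mem_nhds hx)).hasDerivAt

variable (hV : ContDiffOn ℝ 2 V {0}ᶜ)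
include hV

theorem monotoneOn_deriv_sub_lam_mul (hc : lam V c ≠ 0) :
    MonotoneOn (fun x => deriv V x - lam V c * x) (Ioc 0 c) := by
  have hd : ∀ x ∈ Ioi (0 : ℝ),
      HasDerivAt (fun x => deriv V x - lam V c * x) (deriv (deriv V) x - lam V c) x :=
    fun x hx => ((hV.hasDerivAt_deriv isOpen_compl_singleton (ne_of_gt hx)).sub
      ((hasDerivAt_id x).const_mul _)).congr_deriv (by ring)
  refine monotoneOn_of_deriv_nonneg (convex_Ioc 0 c)
    (fun x hx => (hd x hx.1).continuousAt.continuousWithinAt) ?_ ?_ <;> rw [interior_Ioc]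
  · exact fun x hx => (hd x hx.1).differentiableAt.differentiableWithinAt
  · intro x hx
    rw [(hd x hx.1).deriv, sub_nonneg]
    exact lam_le_deriv_deriv hc hx

theorem monotoneOn_deriv_of_lam_pos (hlam : ∀ c, 0 < c → 0 < lam V c) :
    MonotoneOn (deriv V) (Ioi 0) := by
  intro x hx y hy hxy
  have hL := hlam y hy
  have := monotoneOn_deriv_sub_lam_mul hV hL.ne' ⟨hx, hxy⟩ ⟨hy, le_rfl⟩ hxy
  nlinarith

end Potential

/-- quadratic/linear lower bound φ_k(y) ≥ Φ_k(y) for k ≥ 1 and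
y > −k. -/
theorem statement4 (V : ℝ → ℝ) (a : ℝ) (h : BasicAssumptions V a)
    (k : ℝ) (hk : 1 ≤ k) (y : ℝ) (hy : -k < y) :
    PhiLB V k y ≤ phi V k y := by
  set L := lam V (k + 1)
  have hL : 0 < L := h.cvx (k + 1) (by linarith)
  have hderiv : ∀ x ∈ Ioi (0 : ℝ), HasDerivAt V (deriv V x) x := fun x hx =>
    ((h.smooth.differentiableOn two_ne_zero).differentiableAt
      (isOpen_compl_singleton.mem_nhds (ne_of_gt hx))).hasDerivAt
  have hk_mem : k ∈ Ioc 0 (k + 1) := ⟨by linarith, by linarith⟩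
  have hquad : ∀ x ∈ Ioc 0 (k + 1), L / 2 * (x - k) ^ 2 ≤ V x - V k - deriv V k * (x - k) :=
    fun x hx => half_mul_sq_le_sub_sub_mul_of_monotoneOn (convex_Ioc 0 (k + 1))
      (fun t ht => hderiv t ht.1) (monotoneOn_deriv_sub_lam_mul h.smooth hL.ne') hk_mem hx
  unfold PhiLB phi
  split_ifs with hy1
  · have := hquad (k + y) ⟨by linarith, by linarith⟩
    simp only [add_sub_cancel_left] at this
    linarith
  · have hk1 : (0 : ℝ) < k + 1 := by linarith
    have hphi1 := hquad (k + 1) ⟨hk1, le_rfl⟩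
    have hslope : deriv V k - L * k ≤ deriv V (k + 1) - L * (k + 1) :=
      monotoneOn_deriv_sub_lam_mul h.smooth hL.ne' hk_mem ⟨hk1, le_rfl⟩ (by linarith)
    have htangent := ((monotoneOn_deriv_of_lam_pos h.smooth h.cvx).convexOn_of_hasDerivAt
      (convex_Ioi 0) hderiv).add_mul_sub_le_of_hasDerivAt hk1
      (show (0 : ℝ) < k + y by linarith) (hderiv (k + 1) hk1)
    nlinarith [mul_le_mul_of_nonneg_right hslope (by linarith : (0 : ℝ) ≤ y - 1)]
end

section
/- Let V satisfy the basic assumptions and let δ ∈ (0,1]. Then there exists a constant C_δ > 0 such that for every real k ≥ 1 and every y with y ≥ k(δ − 1) (equivalently k + y ≥ δk), the first-order Taylor remainder satisfies φ_k(y) := V(k+y) − V(k) − V'(k)y ≤ C_δ k^{−a−2} y². -/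
/-!
Every point between `k` and `k + y` is at least `δ k ≥ δ`. There `V''` is nonnegative by (Cvx)
and at most `c_δ (δ k)^(-a-2)` by (Dec), so the mean value theorem, applied once to `V'` and once
to `V - V'(k) ·`, bounds `|φ_k(y)|` by `c_δ δ^(-a-2) k^(-a-2) y²`.
-/

open Filter Set MeasureTheory
open scoped Classical ENNReal NNReal BigOperators

theorem abs_taylor_remainder_le_of_contDiffOn {f : ℝ → ℝ} {U : Set ℝ} (hU : IsOpen U)
    (hf : ContDiffOn ℝ 2 f U) {x y M : ℝ} (hxy : uIcc x y ⊆ U)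
    (hM : ∀ t ∈ uIcc x y, |deriv (deriv f) t| ≤ M) :
    |f y - f x - deriv f x * (y - x)| ≤ M * (y - x) ^ 2 := by
  have hdiff : ∀ t ∈ uIcc x y, DifferentiableAt ℝ f t := fun t ht =>
    (hf.differentiableOn (by norm_num)).differentiableAt (hU.mem_nhds (hxy ht))
  have hf' : ContDiffOn ℝ 1 (deriv f) U := hf.deriv_of_isOpen hU (by norm_num)
  have hdiff' : ∀ t ∈ uIcc x y, DifferentiableAt ℝ (deriv f) t := fun t ht =>
    (hf'.differentiableOn (by norm_num)).differentiableAt (hU.mem_nhds (hxy ht))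
  have hderiv : ∀ t ∈ uIcc x y, |deriv f t - deriv f x| ≤ M * |y - x| := fun t ht =>
    calc |deriv f t - deriv f x| ≤ M * |t - x| :=
          (convex_uIcc x y).norm_image_sub_le_of_norm_deriv_le hdiff' hM left_mem_uIcc ht
      _ ≤ M * |y - x| :=
          mul_le_mul_of_nonneg_left (abs_sub_left_of_mem_uIcc ht)
            ((abs_nonneg _).trans (hM x left_mem_uIcc))
  have hg : ∀ t ∈ uIcc x y,
      HasDerivWithinAt (fun u => f u - deriv f x * u) (deriv f t - deriv f x) (uIcc x y) t :=
    fun t ht => (((hdiff t ht).hasDerivAt).sub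
      ((hasDerivAt_id t).const_mul (deriv f x) |>.congr_deriv (mul_one _))).hasDerivWithinAt
  calc |f y - f x - deriv f x * (y - x)|
      = |(f y - deriv f x * y) - (f x - deriv f x * x)| := by congr 1; ring
    _ ≤ M * |y - x| * |y - x| :=
        (convex_uIcc x y).norm_image_sub_le_of_norm_hasDerivWithin_le hg hderiv
          left_mem_uIcc right_mem_uIcc
    _ = M * (y - x) ^ 2 := by rw [mul_assoc, ← abs_mul, ← sq, abs_sq]

namespace BasicAssumptions

variable {V : ℝ → ℝ} {a : ℝ}

theorem deriv_deriv_nonneg (h : BasicAssumptions V a) {t : ℝ} (ht : 0 < t) :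
    0 ≤ deriv (deriv V) t := by
  have hlam := h.cvx (t + 1) (by linarith)
  by_cases hb : BddBelow (deriv (deriv V) '' Ioo 0 (t + 1))
  · exact hlam.le.trans (csInf_le hb ⟨t, ⟨ht, by linarith⟩, rfl⟩)
  · rw [lam, Real.sInf_of_not_bddBelow hb] at hlam
    exact (lt_irrefl 0 hlam).elim

theorem exists_abs_deriv_deriv_le (h : BasicAssumptions V a) {δ : ℝ} (hδ : 0 < δ) :
    ∃ C : ℝ, 0 < C ∧ ∀ k : ℝ, 1 ≤ k → ∀ t : ℝ, δ * k ≤ t →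
      |deriv (deriv V) t| ≤ C * k ^ (-(a + 2)) := by
  obtain ⟨c, hc, hdec⟩ := h.decV'' δ hδ
  refine ⟨c * δ ^ (-(a + 2)), mul_pos hc (Real.rpow_pos_of_pos hδ _), fun k hk t ht => ?_⟩
  have hδk : 0 < δ * k := by positivity
  have ht0 : 0 < t := hδk.trans_le ht
  rw [abs_of_nonneg (h.deriv_deriv_nonneg ht0)]
  calc deriv (deriv V) t ≤ c * |t| ^ (-(a + 2)) :=
        hdec t (by rw [abs_of_pos ht0]; nlinarith)
    _ ≤ c * (δ * k) ^ (-(a + 2)) := by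
        rw [abs_of_pos ht0]
        exact mul_le_mul_of_nonneg_left
          (Real.rpow_le_rpow_of_nonpos hδk ht (by linarith [h.one_lt_a])) hc.le
    _ = c * δ ^ (-(a + 2)) * k ^ (-(a + 2)) := by
        rw [Real.mul_rpow hδ.le (zero_le_one.trans hk), mul_assoc]

end BasicAssumptions

/-- quadratic upper bound: for δ ∈ (0,1] there is C_δ > 0 with
φ_k(y) ≤ C_δ k^{−a−2} y² whenever k ≥ 1 and y ≥ k(δ−1). -/
theorem statement5 (V : ℝ → ℝ) (a : ℝ) (h : BasicAssumptions V a)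
    (δ : ℝ) (hδ0 : 0 < δ) (hδ1 : δ ≤ 1) :
    ∃ C : ℝ, 0 < C ∧ ∀ k : ℝ, 1 ≤ k → ∀ y : ℝ, k * (δ - 1) ≤ y →
      phi V k y ≤ C * k ^ (-(a + 2)) * y ^ 2 := by
  obtain ⟨C, hC, hbound⟩ := h.exists_abs_deriv_deriv_le hδ0
  refine ⟨C, hC, fun k hk y hy => ?_⟩
  have hsegment : ∀ t ∈ uIcc k (k + y), δ * k ≤ t := fun t ht =>
    le_trans (le_min (by nlinarith) (by linarith)) ht.1
  have hpos : uIcc k (k + y) ⊆ Ioi 0 := fun t ht =>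
    lt_of_lt_of_le (by positivity) (hsegment t ht)
  have htaylor := abs_taylor_remainder_le_of_contDiffOn isOpen_Ioi
    (h.smooth.mono fun t (ht : 0 < t) => ht.ne') hpos
    fun t ht => hbound k hk t (hsegment t ht)
  rw [add_sub_cancel_left] at htaylor
  exact (le_abs_self _).trans htaylor
end

section
/- Let V satisfy the basic assumptions with decay exponent a > 3/2. Then σ^∞ ∈ ℓ²(ℕ); for every n ≥ 2 and every i ≥ 1 one has 0 ≤ σ^n(i) ≤ σ^∞(i); and σ^n → σ^∞ in ℓ²(ℕ) as n → ∞. -/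
open Filter Set MeasureTheory
open scoped Classical ENNReal NNReal BigOperators

/-!
On `(0, ∞)` we have `V'' > 0` and `V' → 0`, so `V' ≤ 0`; comparing `V'` with a primitive of
the bound `V'' ≤ c x^{-(a+2)}` gives `|V'(x)| ≤ C x^{-(a+1)}` for `x ≥ 1`. Hence
`σ^∞(i) ≤ C Σ_{k>i} k^{-a} ≤ C i^{1-a} / (a - 1)`, which is square summable exactly when
`a > 3/2`. The weights `min (k - i) (n + 1 - i - k)` of `σ^n(i)` are at most the weights
`k - i` of `σ^∞(i)` and agree with them for `k` up to about `n / 2`, so `σ^n(i) → σ^∞(i)`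
for each `i`, and dominated convergence with `(σ^∞)²` gives convergence in `ℓ²`.
-/

open Topology

namespace BasicAssumptions

variable {V : ℝ → ℝ} {a : ℝ}

theorem differentiableAt_deriv (h : BasicAssumptions V a) {x : ℝ} (hx : x ≠ 0) :
    DifferentiableAt ℝ (deriv V) x :=
  ((h.smooth.deriv_of_isOpen isOpen_compl_singleton (by norm_num)).differentiableOn
    one_ne_zero).differentiableAt (isOpen_compl_singleton.mem_nhds hx)

theorem deriv_deriv_pos_s6 (h : BasicAssumptions V a) {x : ℝ} (hx : 0 < x) :
    0 < deriv (deriv V) x := by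
  have hlam := h.cvx (x + 1) (by linarith)
  have hbdd : BddBelow (deriv (deriv V) '' Ioo 0 (x + 1)) := by
    by_contra hb
    rw [lam, csInf_of_not_bddBelow hb, Real.sInf_empty] at hlam
    exact hlam.false
  exact hlam.trans_le (csInf_le hbdd ⟨x, ⟨hx, by linarith⟩, rfl⟩)

theorem monotoneOn_deriv (h : BasicAssumptions V a) : MonotoneOn (deriv V) (Ioi 0) :=
  monotoneOn_of_deriv_nonneg (convex_Ioi 0)
    (fun _ hx => (h.differentiableAt_deriv (ne_of_gt hx)).continuousAt.continuousWithinAt)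
    (fun _ hx => (h.differentiableAt_deriv (ne_of_gt (interior_subset hx))).differentiableWithinAt)
    (fun _ hx => (h.deriv_deriv_pos_s6 (interior_subset hx)).le)

theorem deriv_nonpos (h : BasicAssumptions V a) {x : ℝ} (hx : 0 < x) : deriv V x ≤ 0 :=
  ge_of_tendsto h.decV' <| (eventually_ge_atTop x).mono fun _ ht =>
    h.monotoneOn_deriv hx (hx.trans_le ht) ht

/-- `V' + c x^{-(a+1)}/(a+1)` is antitone on `[1, ∞)`, where `V'' ≤ c x^{-(a+2)}`, and tends
to `0`; hence it is nonnegative. -/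
theorem abs_deriv_le (h : BasicAssumptions V a) :
    ∃ C, 0 ≤ C ∧ ∀ x, 1 ≤ x → |deriv V x| ≤ C * x ^ (-(a + 1)) := by
  obtain ⟨c, hc0, hc⟩ := h.decV'' 1 one_pos
  have ha : 0 < a + 1 := by linarith [h.one_lt_a]
  set g : ℝ → ℝ := fun x => deriv V x + c / (a + 1) * x ^ (-(a + 1))
  have hg_deriv : ∀ x, 0 < x → HasDerivAt g (deriv (deriv V) x - c * x ^ (-(a + 2))) x := by
    intro x hx
    refine ((h.differentiableAt_deriv hx.ne').hasDerivAt.add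
      ((Real.hasDerivAt_rpow_const (p := -(a + 1)) (Or.inl hx.ne')).const_mul
        (c / (a + 1)))).congr_deriv ?_
    rw [show -(a + 1) - 1 = -(a + 2) by ring]
    field_simp
    ring
  have hg_anti : AntitoneOn g (Ici 1) := by
    refine antitoneOn_of_deriv_nonpos (convex_Ici 1)
      (fun x hx => (hg_deriv x (by linarith [hx.out])).continuousAt.continuousWithinAt)
      (fun x hx => ?_) (fun x hx => ?_)
    all_goals rw [interior_Ici] at hx
    · exact (hg_deriv x (by linarith [hx.out])).differentiableAt.differentiableWithinAt
    · rw [(hg_deriv x (by linarith [hx.out])).deriv, sub_nonpos]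
      have hx0 : 0 < x := one_pos.trans hx
      simpa only [abs_of_pos hx0] using hc x (by rw [abs_of_pos hx0]; exact hx.out.le)
  have hg_lim : Tendsto g atTop (𝓝 0) := by
    simpa only [mul_zero, add_zero] using
      h.decV'.add ((tendsto_rpow_neg_atTop ha).const_mul (c / (a + 1)))
  refine ⟨c / (a + 1), by positivity, fun x hx => ?_⟩
  have hgx : 0 ≤ g x := le_of_tendsto hg_lim <| (eventually_ge_atTop x).mono fun t ht =>
    hg_anti hx (hx.trans ht) ht
  rw [abs_of_nonpos (h.deriv_nonpos (by linarith))]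
  linarith

end BasicAssumptions

theorem sum_range_rpow_neg_le {s x : ℝ} (hs : 1 < s) (hx : 0 < x) (N : ℕ) :
    ∑ m ∈ Finset.range N, (x + ((m + 1 : ℕ) : ℝ)) ^ (-s) ≤ x ^ (1 - s) / (s - 1) := by
  have hanti : AntitoneOn (fun t : ℝ => t ^ (-s)) (Icc x (x + N)) := fun t ht u _ htu =>
    Real.rpow_le_rpow_of_nonpos (hx.trans_le ht.1) htu (by linarith)
  have hzero : (0 : ℝ) ∉ uIcc x (x + N) := by
    rw [uIcc_of_le (by simp)]
    exact fun h0 => hx.not_ge h0.1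
  have hint : ∫ t in x..x + N, t ^ (-s) = ((x + N) ^ (1 - s) - x ^ (1 - s)) / (1 - s) := by
    rw [integral_rpow (Or.inr ⟨by linarith, hzero⟩), show -s + 1 = 1 - s by ring]
  have htail : 0 ≤ (x + N) ^ (1 - s) / (s - 1) :=
    div_nonneg (Real.rpow_nonneg (by positivity) _) (by linarith)
  calc ∑ m ∈ Finset.range N, (x + ((m + 1 : ℕ) : ℝ)) ^ (-s)
      ≤ ∫ t in x..x + N, t ^ (-s) := hanti.sum_le_integral
    _ = x ^ (1 - s) / (s - 1) - (x + N) ^ (1 - s) / (s - 1) := by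
        rw [hint, ← neg_sub s 1, div_neg, ← neg_div, neg_sub, sub_div]
    _ ≤ x ^ (1 - s) / (s - 1) := sub_le_self _ htail

noncomputable def sigmaTerm (V : ℝ → ℝ) (i m : ℕ) : ℝ :=
  ((m + 1 : ℕ) : ℝ) * |deriv V ((i + 1 + m : ℕ) : ℝ)|

section Sigma

variable {V : ℝ → ℝ}

theorem sigmaTerm_nonneg (i m : ℕ) : 0 ≤ sigmaTerm V i m := by
  unfold sigmaTerm
  positivity

theorem sigmaInf_zero : sigmaInf V 0 = 0 := if_pos rfl

theorem sigmaInf_eq_tsum {i : ℕ} (hi : i ≠ 0) : sigmaInf V i = ∑' m, sigmaTerm V i m :=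
  if_neg hi

theorem sigmaInf_nonneg (i : ℕ) : 0 ≤ sigmaInf V i := by
  rcases eq_or_ne i 0 with rfl | hi
  · exact sigmaInf_zero.ge
  · exact sigmaInf_eq_tsum hi ▸ tsum_nonneg (sigmaTerm_nonneg i)

theorem sigman_zero (n : ℕ) : sigman V n 0 = 0 := if_neg (by omega)

theorem sigman_nonneg (n i : ℕ) : 0 ≤ sigman V n i := by
  unfold sigman
  split_ifs
  exacts [Finset.sum_nonneg fun _ _ => by positivity, le_rfl]

theorem sigman_eq_sum_range {n i : ℕ} (hi : 1 ≤ i) (hin : 2 * i ≤ n) :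
    sigman V n i = ∑ m ∈ Finset.range (n - 2 * i),
      ((min (m + 1) (n - 2 * i - m) : ℕ) : ℝ) * |deriv V ((i + 1 + m : ℕ) : ℝ)| := by
  rw [sigman, if_pos ⟨hi, by omega⟩, ← Finset.Ico_add_one_right_eq_Icc,
    Finset.sum_Ico_eq_sum_range, show n - i + 1 - (i + 1) = n - 2 * i by omega]
  refine Finset.sum_congr rfl fun m _ => ?_
  rw [show i + 1 + m - i = m + 1 by omega, show n + 1 - i - (i + 1 + m) = n - 2 * i - m by omega]

theorem sigman_le_sigmaInf {i : ℕ} (hs : Summable (sigmaTerm V i)) (n : ℕ) :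
    sigman V n i ≤ sigmaInf V i := by
  rcases Nat.eq_zero_or_pos i with rfl | hi
  · rw [sigman_zero, sigmaInf_zero]
  by_cases hin : 2 * i ≤ n
  · rw [sigman_eq_sum_range hi hin, sigmaInf_eq_tsum hi.ne']
    refine le_trans (Finset.sum_le_sum fun m _ => ?_)
      (hs.sum_le_tsum _ fun m _ => sigmaTerm_nonneg i m)
    exact mul_le_mul_of_nonneg_right (by exact_mod_cast min_le_left _ _) (abs_nonneg _)
  · rw [sigman, if_neg (by omega)]
    exact sigmaInf_nonneg i

theorem tendsto_sigman {i : ℕ} (hs : Summable (sigmaTerm V i)) :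
    Tendsto (fun n => sigman V n i) atTop (𝓝 (sigmaInf V i)) := by
  rcases Nat.eq_zero_or_pos i with rfl | hi
  · simp only [sigman_zero, sigmaInf_zero, tendsto_const_nhds]
  have hlen : Tendsto (fun n => (n - 2 * i) / 2) atTop atTop :=
    (Nat.tendsto_div_const_atTop two_ne_zero).comp (tendsto_sub_atTop_nat _)
  have hlower : ∀ᶠ n in atTop,
      ∑ m ∈ Finset.range ((n - 2 * i) / 2), sigmaTerm V i m ≤ sigman V n i := by
    filter_upwards [eventually_ge_atTop (2 * i)] with n hn
    rw [sigman_eq_sum_range hi hn]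
    refine le_trans (le_of_eq (Finset.sum_congr rfl fun m hm => ?_))
      (Finset.sum_le_sum_of_subset_of_nonneg (Finset.range_subset_range.2 (Nat.div_le_self _ 2))
        fun _ _ _ => by positivity)
    rw [Finset.mem_range] at hm
    rw [sigmaTerm, show min (m + 1) (n - 2 * i - m) = m + 1 by omega]
  have hupper : ∀ n, sigman V n i ≤ sigmaInf V i := sigman_le_sigmaInf hs
  rw [sigmaInf_eq_tsum hi.ne'] at hupper ⊢
  exact tendsto_of_tendsto_of_tendsto_of_le_of_le' (hs.hasSum.tendsto_sum_nat.comp hlen)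
    tendsto_const_nhds hlower (Eventually.of_forall hupper)

end Sigma

section Decay

variable {V : ℝ → ℝ} {a C : ℝ}

theorem sigmaTerm_le (hC : ∀ x, 1 ≤ x → |deriv V x| ≤ C * x ^ (-(a + 1))) (i m : ℕ) :
    sigmaTerm V i m ≤ C * ((i : ℝ) + ((m + 1 : ℕ) : ℝ)) ^ (-a) := by
  set y : ℝ := ((i + 1 + m : ℕ) : ℝ)
  have hy : y = (i : ℝ) + ((m + 1 : ℕ) : ℝ) := by push_cast [y]; ring
  have hy1 : 1 ≤ y := by simp only [y, Nat.one_le_cast]; omega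
  have hm : ((m + 1 : ℕ) : ℝ) ≤ y := by rw [hy]; linarith [(i.cast_nonneg : (0 : ℝ) ≤ i)]
  calc sigmaTerm V i m ≤ y * (C * y ^ (-(a + 1))) :=
        mul_le_mul hm (hC y hy1) (abs_nonneg _) (by positivity)
    _ = C * y ^ (-a) := by
        rw [mul_left_comm, mul_comm y, ← Real.rpow_add_one (by positivity),
          show -(a + 1) + 1 = -a by ring]
    _ = C * ((i : ℝ) + ((m + 1 : ℕ) : ℝ)) ^ (-a) := by rw [hy]

theorem summable_sigmaTerm (hC : ∀ x, 1 ≤ x → |deriv V x| ≤ C * x ^ (-(a + 1))) (ha : 1 < a)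
    (i : ℕ) : Summable (sigmaTerm V i) := by
  have hshift : Summable fun m : ℕ => ((i : ℝ) + ((m + 1 : ℕ) : ℝ)) ^ (-a) := by
    refine ((summable_nat_add_iff (i + 1)).2
      (Real.summable_nat_rpow.2 (by linarith : -a < -1))).congr fun m => ?_
    push_cast
    ring_nf
  exact .of_nonneg_of_le (sigmaTerm_nonneg i) (sigmaTerm_le hC i) (hshift.mul_left C)

theorem sigmaInf_le_rpow (hC0 : 0 ≤ C)
    (hC : ∀ x, 1 ≤ x → |deriv V x| ≤ C * x ^ (-(a + 1))) (ha : 1 < a) (i : ℕ) :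
    sigmaInf V i ≤ C / (a - 1) * (i : ℝ) ^ (1 - a) := by
  rcases Nat.eq_zero_or_pos i with rfl | hi
  · rw [sigmaInf_zero, Nat.cast_zero, Real.zero_rpow (by linarith), mul_zero]
  rw [sigmaInf_eq_tsum hi.ne']
  refine Real.tsum_le_of_sum_range_le (sigmaTerm_nonneg i) fun N => ?_
  calc ∑ m ∈ Finset.range N, sigmaTerm V i m
      ≤ C * ∑ m ∈ Finset.range N, ((i : ℝ) + ((m + 1 : ℕ) : ℝ)) ^ (-a) := by
        rw [Finset.mul_sum]
        exact Finset.sum_le_sum fun m _ => sigmaTerm_le hC i m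
    _ ≤ C * ((i : ℝ) ^ (1 - a) / (a - 1)) :=
        mul_le_mul_of_nonneg_left (sum_range_rpow_neg_le ha (by exact_mod_cast hi) N) hC0
    _ = C / (a - 1) * (i : ℝ) ^ (1 - a) := by ring

theorem summable_sq_sigmaInf (hC0 : 0 ≤ C)
    (hC : ∀ x, 1 ≤ x → |deriv V x| ≤ C * x ^ (-(a + 1))) (ha : 3 / 2 < a) :
    Summable fun i => sigmaInf V i ^ 2 := by
  have hbound : Summable fun i : ℕ => (C / (a - 1) * (i : ℝ) ^ (1 - a)) ^ 2 := by
    refine ((Real.summable_nat_rpow.2 (by linarith : (1 - a) * 2 < -1)).mul_left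
      ((C / (a - 1)) ^ 2)).congr fun i => ?_
    rw [mul_pow, Real.rpow_mul i.cast_nonneg, Real.rpow_two]
  exact .of_nonneg_of_le (fun i => sq_nonneg _)
    (fun i => pow_le_pow_left₀ (sigmaInf_nonneg i) (sigmaInf_le_rpow hC0 hC (by linarith) i) 2)
    hbound

end Decay

theorem tendsto_tsum_sq_sigmaInf_sub_sigman {V : ℝ → ℝ} (hs : ∀ i, Summable (sigmaTerm V i))
    (hsq : Summable fun i => sigmaInf V i ^ 2) :
    Tendsto (fun n => ∑' i, (sigmaInf V i - sigman V n i) ^ 2) atTop (𝓝 0) := by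
  have hlim : ∀ i, Tendsto (fun n => (sigmaInf V i - sigman V n i) ^ 2) atTop (𝓝 0) := by
    intro i
    simpa using ((tendsto_const_nhds (x := sigmaInf V i)).sub (tendsto_sigman (hs i))).pow 2
  have hbound : ∀ n i, ‖(sigmaInf V i - sigman V n i) ^ 2‖ ≤ sigmaInf V i ^ 2 := by
    intro n i
    rw [Real.norm_eq_abs, abs_of_nonneg (sq_nonneg _)]
    exact pow_le_pow_left₀ (sub_nonneg.2 (sigman_le_sigmaInf (hs i) n))
      (sub_le_self _ (sigman_nonneg n i)) 2
  simpa using tendsto_tsum_of_dominated_convergence hsq hlim (Eventually.of_forall hbound)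

/-- for a > 3/2, σ^∞ ∈ ℓ²(ℕ), 0 ≤ σ^n(i) ≤ σ^∞(i) for all n ≥ 2
and i ≥ 1, and σ^n → σ^∞ in ℓ²(ℕ). -/
theorem statement6 (V : ℝ → ℝ) (a : ℝ) (h : BasicAssumptions V a)
    (ha : 3 / 2 < a) :
    Summable (fun i : ℕ => sigmaInf V i ^ 2) ∧
    (∀ n : ℕ, 2 ≤ n → ∀ i : ℕ, 1 ≤ i →
      0 ≤ sigman V n i ∧ sigman V n i ≤ sigmaInf V i) ∧
    Filter.Tendsto (fun n : ℕ => ∑' i : ℕ, (sigmaInf V i - sigman V n i) ^ 2)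
      Filter.atTop (nhds 0) := by
  obtain ⟨C, hC0, hC⟩ := h.abs_deriv_le
  have hs : ∀ i, Summable (sigmaTerm V i) := summable_sigmaTerm hC h.one_lt_a
  have hsq := summable_sq_sigmaInf hC0 hC ha
  exact ⟨hsq, fun n _ i _ => ⟨sigman_nonneg n i, sigman_le_sigmaInf (hs i) n⟩,
    tendsto_tsum_sq_sigmaInf_sub_sigman hs hsq⟩
end

section
/- Let a > 1 and suppose V : ℝ → [0,+∞] is even and C² on ℝ∖{0}, with V'(x) < 0 for all x > 0, and there exist constants c₁, c₂ > 0 such that c₁ x^{−a−1} ≤ |V'(x)| ≤ c₂ x^{−a−1} for all x ≥ 1. Then there exist constants C₁, C₂ > 0 such that C₁ i^{1−a} ≤ σ^∞(i) ≤ C₂ i^{1−a} for all i ≥ 1; consequently, for p ∈ [1, ∞), σ^∞ ∈ ℓ^p(ℕ) if and only if p > 1/(a−1). -/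
open Filter Set MeasureTheory
open scoped Classical ENNReal NNReal BigOperators

lemma mvt_aux (a : ℝ) (ha : 1 < a) (x : ℝ) (hx : 1 ≤ x) :
    (a - 1) * (x + 1) ^ (-a) ≤ x ^ (1 - a) - (x + 1) ^ (1 - a) := by
  have hx0 : (0:ℝ) < x := by linarith
  obtain ⟨c, hc, hceq⟩ := exists_hasDerivAt_eq_slope (fun t => t ^ (1 - a))
      (fun t => (1 - a) * t ^ (-a)) (by linarith : x < x + 1)
      (by
        intro t ht
        have ht0 : t ≠ 0 := by have h1 := ht.1; intro h; rw [h] at h1; linarith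
        exact (Real.continuousAt_rpow_const t (1 - a) (Or.inl ht0)).continuousWithinAt)
      (by
        intro t ht
        have ht0 : t ≠ 0 := by have h1 := ht.1; intro h; rw [h] at h1; linarith
        have := Real.hasDerivAt_rpow_const (x := t) (p := 1 - a) (Or.inl ht0)
        simpa [sub_sub, show (1:ℝ) - a - 1 = -a by ring] using this)
  have hc0 : 0 < c := lt_trans hx0 hc.1
  have hmono : (x + 1) ^ (-a) ≤ c ^ (-a) :=
    Real.rpow_le_rpow_of_nonpos hc0 (le_of_lt hc.2) (by linarith)
  have heq : (1 - a) * c ^ (-a) = (x + 1) ^ (1 - a) - x ^ (1 - a) := by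
    rw [hceq]; ring
  nlinarith [heq, hmono, mul_le_mul_of_nonneg_left hmono (by linarith : (0:ℝ) ≤ a - 1)]

/-- two-sided power bounds on σ^∞ and the resulting ℓ^p
membership criterion. -/
theorem statement16 (V : ℝ → ℝ) (a : ℝ) (ha : 1 < a)
    (hnonneg : ∀ x : ℝ, 0 ≤ V x)
    (heven : ∀ x : ℝ, V (-x) = V x)
    (hsmooth : ContDiffOn ℝ 2 V {(0 : ℝ)}ᶜ)
    (hneg : ∀ x : ℝ, 0 < x → deriv V x < 0)
    (c₁ c₂ : ℝ) (hc₁ : 0 < c₁) (hc₂ : 0 < c₂)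
    (hbound : ∀ x : ℝ, 1 ≤ x →
      c₁ * x ^ (-(a + 1)) ≤ |deriv V x| ∧ |deriv V x| ≤ c₂ * x ^ (-(a + 1))) :
    (∃ C₁ : ℝ, 0 < C₁ ∧ ∃ C₂ : ℝ, 0 < C₂ ∧ ∀ i : ℕ, 1 ≤ i →
      C₁ * (i : ℝ) ^ (1 - a) ≤ sigmaInf V i ∧
        sigmaInf V i ≤ C₂ * (i : ℝ) ^ (1 - a)) ∧
    ∀ p : ℝ, 1 ≤ p →
      (Summable (fun i : ℕ => |sigmaInf V i| ^ p) ↔ 1 / (a - 1) < p) := by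
  have ha1 : (0:ℝ) < a - 1 := by linarith
  set C₁ : ℝ := c₁ * 3 ^ (-(a+1)) with hC₁def
  set C₂ : ℝ := c₂ / (a-1) with hC₂def
  have hC₁ : 0 < C₁ := by positivity
  have hC₂ : 0 < C₂ := by positivity
  have key : ∀ i : ℕ, 1 ≤ i → C₁ * (i:ℝ)^(1-a) ≤ sigmaInf V i ∧
      sigmaInf V i ≤ C₂ * (i:ℝ)^(1-a) := by
    intro i hi
    have hi0 : (0:ℝ) < (i:ℝ) := by exact_mod_cast hi
    set g : ℕ → ℝ := fun m => ((m + 1 : ℕ) : ℝ) * |deriv V ((i + 1 + m : ℕ) : ℝ)| with hg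
    have hσ : sigmaInf V i = ∑' m, g m := by
      rw [sigmaInf, if_neg (by omega)]
    have hgnn : ∀ m, 0 ≤ g m := fun m => by positivity
    set b : ℕ → ℝ := fun m => ((i:ℝ) + m) ^ (1-a) with hb
    -- upper pointwise bound
    have hble : ∀ m : ℕ, g m ≤ C₂ * (b m - b (m+1)) := by
      intro m
      set x : ℝ := (i:ℝ) + 1 + m with hx
      have hx1 : (1:ℝ) ≤ x := by
        have : (0:ℝ) ≤ (m:ℝ) := Nat.cast_nonneg m
        simp only [hx]; linarith
      have hx0 : (0:ℝ) < x := by linarith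
      have hcast : ((i + 1 + m : ℕ) : ℝ) = x := by push_cast; ring
      have hmx : (m:ℝ) + 1 ≤ x := by simp only [hx]; linarith
      have e1 : x ^ (-(a+1)) = x ^ (-a) * x⁻¹ := by
        rw [show -(a+1) = -a + (-1) by ring, Real.rpow_add hx0, Real.rpow_neg_one]
      have step1 : g m ≤ c₂ * x ^ (-a) := by
        have h1 : g m ≤ ((m:ℝ) + 1) * (c₂ * x ^ (-(a+1))) := by
          have := (hbound x hx1).2
          have h2 : ((m + 1 : ℕ) : ℝ) = (m:ℝ) + 1 := by push_cast; ring
          rw [hg]; simp only [hcast, h2]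
          exact mul_le_mul_of_nonneg_left this (by positivity)
        have h3 : ((m:ℝ) + 1) * x⁻¹ ≤ 1 := by
          rw [← div_eq_mul_inv]; exact (div_le_one hx0).mpr hmx
        calc g m ≤ ((m:ℝ) + 1) * (c₂ * x ^ (-(a+1))) := h1
          _ = c₂ * x ^ (-a) * (((m:ℝ) + 1) * x⁻¹) := by rw [e1]; ring
          _ ≤ c₂ * x ^ (-a) * 1 :=
            mul_le_mul_of_nonneg_left h3 (by positivity)
          _ = c₂ * x ^ (-a) := mul_one _
      have step2 : (a-1) * x ^ (-a) ≤ b m - b (m+1) := by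
        have h1i : (1:ℝ) ≤ (i:ℝ) := by exact_mod_cast hi
        have hy : (1:ℝ) ≤ (i:ℝ) + m := by
          have : (0:ℝ) ≤ (m:ℝ) := Nat.cast_nonneg m
          linarith
        have hmvt := mvt_aux a ha ((i:ℝ) + m) hy
        have e2 : (i:ℝ) + m + 1 = x := by simp only [hx]; ring
        rw [e2] at hmvt
        have e3 : b (m+1) = x ^ (1-a) := by
          simp only [hb]
          rw [← e2]
          congr 1
          push_cast
          ring
        rw [e3]
        exact hmvt
      calc g m ≤ c₂ * x ^ (-a) := step1
        _ = C₂ * ((a-1) * x ^ (-a)) := by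
          rw [hC₂def]; field_simp
        _ ≤ C₂ * (b m - b (m+1)) := mul_le_mul_of_nonneg_left step2 hC₂.le
    have hpartial : ∀ N : ℕ, ∑ m ∈ Finset.range N, g m ≤ C₂ * (i:ℝ)^(1-a) := by
      intro N
      have h1 : ∑ m ∈ Finset.range N, g m ≤ ∑ m ∈ Finset.range N, C₂ * (b m - b (m+1)) :=
        Finset.sum_le_sum fun m _ => hble m
      have h2 : ∑ m ∈ Finset.range N, C₂ * (b m - b (m+1)) = C₂ * (b 0 - b N) := by
        rw [← Finset.mul_sum, Finset.sum_range_sub' b N]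
      have hb0 : b 0 = (i:ℝ)^(1-a) := by simp [hb]
      have hbN : 0 ≤ b N := Real.rpow_nonneg (by positivity) _
      calc ∑ m ∈ Finset.range N, g m ≤ C₂ * (b 0 - b N) := h1.trans h2.le
        _ ≤ C₂ * b 0 := mul_le_mul_of_nonneg_left (by linarith) hC₂.le
        _ = C₂ * (i:ℝ)^(1-a) := by rw [hb0]
    have hsum : Summable g := summable_of_sum_range_le hgnn hpartial
    constructor
    · -- lower bound
      have hlow : ∀ m ∈ Finset.Ico (i-1) (2*i-1),
          (i:ℝ) * (c₁ * ((3*(i:ℝ))) ^ (-(a+1))) ≤ g m := by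
        intro m hm
        rw [Finset.mem_Ico] at hm
        have hm1 : i ≤ m + 1 := by omega
        have hm2 : i + 1 + m ≤ 3 * i := by omega
        set x : ℝ := ((i + 1 + m : ℕ) : ℝ) with hx
        have hx1 : (1:ℝ) ≤ x := by
          have h7 : (1:ℕ) ≤ i + 1 + m := by omega
          simp only [hx]
          exact_mod_cast h7
        have hx0 : (0:ℝ) < x := by linarith
        have hx3 : x ≤ 3 * (i:ℝ) := by
          rw [hx]; exact_mod_cast hm2
        have h1 : c₁ * (3*(i:ℝ)) ^ (-(a+1)) ≤ |deriv V x| := by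
          have := (hbound x hx1).1
          have h2 : (3*(i:ℝ)) ^ (-(a+1)) ≤ x ^ (-(a+1)) :=
            Real.rpow_le_rpow_of_nonpos hx0 hx3 (by linarith)
          nlinarith
        have h3 : (i:ℝ) ≤ ((m + 1 : ℕ) : ℝ) := by exact_mod_cast hm1
        exact mul_le_mul h3 h1 (by positivity) (by positivity)
      have hcard : (Finset.Ico (i-1) (2*i-1)).card = i := by
        rw [Nat.card_Ico]; omega
      have h4 : (i:ℝ) * ((i:ℝ) * (c₁ * ((3*(i:ℝ))) ^ (-(a+1)))) ≤
          ∑ m ∈ Finset.Ico (i-1) (2*i-1), g m := by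
        have := Finset.card_nsmul_le_sum (Finset.Ico (i-1) (2*i-1))
          g ((i:ℝ) * (c₁ * ((3*(i:ℝ))) ^ (-(a+1)))) hlow
        rwa [hcard, nsmul_eq_mul] at this
      have h5 : ∑ m ∈ Finset.Ico (i-1) (2*i-1), g m ≤ ∑' m, g m :=
        Summable.sum_le_tsum _ (fun m _ => hgnn m) hsum
      have h6 : C₁ * (i:ℝ)^(1-a) = (i:ℝ) * ((i:ℝ) * (c₁ * ((3*(i:ℝ))) ^ (-(a+1)))) := by
        rw [hC₁def, Real.mul_rpow (by norm_num : (0:ℝ) ≤ 3) hi0.le,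
          show (1:ℝ)-a = 1 + (1 + (-(a+1))) by ring, Real.rpow_add hi0,
          Real.rpow_add hi0, Real.rpow_one]
        ring
      rw [hσ, h6]
      exact h4.trans h5
    · rw [hσ]
      exact Summable.tsum_le_of_sum_range_le hsum hpartial
  have hσnn : ∀ i : ℕ, 0 ≤ sigmaInf V i := by
    intro i
    rw [sigmaInf]
    split_ifs with h
    · exact le_refl 0
    · exact tsum_nonneg fun m => by positivity
  refine ⟨⟨C₁, hC₁, C₂, hC₂, key⟩, ?_⟩
  intro p hp
  have hp0 : (0:ℝ) < p := lt_of_lt_of_le one_pos hp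
  have hexp_ne : p * (1 - a) ≠ 0 := by
    intro h
    rcases mul_eq_zero.mp h with h | h
    · exact hp0.ne' h
    · linarith
  constructor
  · intro hsum
    by_contra hcon
    push_neg at hcon
    have hle : ∀ i : ℕ, C₁ ^ p * (i:ℝ) ^ (p * (1-a)) ≤ |sigmaInf V i| ^ p := by
      intro i
      rcases Nat.eq_zero_or_pos i with hi | hi
      · subst hi
        simp only [Nat.cast_zero, Real.zero_rpow hexp_ne, mul_zero]
        exact Real.rpow_nonneg (abs_nonneg _) p
      · have hk := (key i hi).1
        have h1 : (C₁ * (i:ℝ)^(1-a)) ^ p ≤ (sigmaInf V i) ^ p :=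
          Real.rpow_le_rpow (by positivity) hk hp0.le
        have h2 : (C₁ * (i:ℝ)^(1-a)) ^ p = C₁ ^ p * (i:ℝ) ^ (p * (1-a)) := by
          rw [Real.mul_rpow hC₁.le (Real.rpow_nonneg (Nat.cast_nonneg i) _),
            ← Real.rpow_mul (Nat.cast_nonneg i), mul_comm (1-a) p]
        rw [abs_of_nonneg (hσnn i), ← h2]
        exact h1
    have hs1 : Summable (fun i : ℕ => C₁ ^ p * (i:ℝ) ^ (p * (1-a))) :=
      hsum.of_nonneg_of_le (fun i => by positivity) hle
    have hs2 : Summable (fun i : ℕ => (i:ℝ) ^ (p * (1-a))) := by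
      have h3 := hs1.mul_left (C₁ ^ p)⁻¹
      have hne : C₁ ^ p ≠ 0 := by positivity
      simpa [← mul_assoc, inv_mul_cancel₀ hne] using h3
    have h4 : p * (1-a) < -1 := Real.summable_nat_rpow.mp hs2
    have h5 : p * (a-1) ≤ 1 := by
      have h6 := mul_le_mul_of_nonneg_right hcon ha1.le
      rwa [one_div, inv_mul_cancel₀ (ne_of_gt ha1)] at h6
    nlinarith [h4, h5]
  · intro hpgt
    have h4 : p * (1-a) < -1 := by
      have := (div_lt_iff₀ ha1).mp hpgt
      nlinarith
    have hle : ∀ i : ℕ, |sigmaInf V i| ^ p ≤ C₂ ^ p * (i:ℝ) ^ (p * (1-a)) := by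
      intro i
      rcases Nat.eq_zero_or_pos i with hi | hi
      · subst hi
        simp only [Nat.cast_zero, Real.zero_rpow hexp_ne, mul_zero]
        rw [sigmaInf, if_pos rfl, abs_zero, Real.zero_rpow hp0.ne']
      · have hk := (key i hi).2
        have h1 : (sigmaInf V i) ^ p ≤ (C₂ * (i:ℝ)^(1-a)) ^ p :=
          Real.rpow_le_rpow (hσnn i) hk hp0.le
        have h2 : (C₂ * (i:ℝ)^(1-a)) ^ p = C₂ ^ p * (i:ℝ) ^ (p * (1-a)) := by
          rw [Real.mul_rpow hC₂.le (Real.rpow_nonneg (Nat.cast_nonneg i) _),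
            ← Real.rpow_mul (Nat.cast_nonneg i), mul_comm (1-a) p]
        rw [abs_of_nonneg (hσnn i), ← h2]
        exact h1
    exact Summable.of_nonneg_of_le (fun i => Real.rpow_nonneg (abs_nonneg _) p) hle
      ((Real.summable_nat_rpow.mpr h4).mul_left (C₂ ^ p))
end
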